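/- arXiv:1106.5454 — 4 statements merged into one kernel-verified Lean document; each statement's English description precedes it below -/
import Mathlib

section
/- Let v : ℝ² → ℝ be a C² function belonging to the Sobolev space H²(ℝ²). If Δv(x) ≥ (|x|² − 4)·v(x) for all x with |x| ≥ √17, and v(x) ≤ 0 for all x with |x| = √17, then v(x) ≤ 0 for all x with |x| ≥ √17. -/
open MeasureTheory Real Set

noncomputable section

/-- The Euclidean plane `ℝ²`. -/
abbrev E2 : Type := EuclideanSpace ℝ (Fin 2)

/-- The standard basis vectors of `ℝ²`. -/
noncomputable def std (i : Fin 2) : E2 := EuclideanSpace.single i 1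

/-- The partial derivative of `f` in the `i`-th coordinate direction. -/
noncomputable def D1 (f : E2 → ℝ) (i : Fin 2) (x : E2) : ℝ := fderiv ℝ f x (std i)

/-- Second partial derivative `∂_j ∂_i f`. -/
noncomputable def D2 (f : E2 → ℝ) (i j : Fin 2) (x : E2) : ℝ := fderiv ℝ (D1 f i) x (std j)

/-- The Euclidean Laplacian `Δf = ∑ ∂_{ii} f`. -/
noncomputable def lap (f : E2 → ℝ) (x : E2) : ℝ := ∑ i, D2 f i i x

/-- `g` lies in the Sobolev space `H²` of the region `Ω ⊆ ℝ²`. -/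
def MemH2On (g : E2 → ℝ) (Ω : Set E2) : Prop :=
  MemLp g 2 (volume.restrict Ω) ∧
  MemLp (fun x => ‖fderiv ℝ g x‖) 2 (volume.restrict Ω) ∧
  MemLp (fun x => ‖fderiv ℝ (fderiv ℝ g) x‖) 2 (volume.restrict Ω)

/-! Since `v ∈ H¹`, Fubini and Markov's inequality give lines `x₁ = ±a` and `x₂ = ±b`, beyond any
bound, over which `v² + |∇v|²` has small integral; along such a line `v² ≤ ∫ (v² + |v'|²)` by the
fundamental theorem of calculus for `v²`, which vanishes at infinity. If `v(x₀) > 0` for some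
`|x₀| ≥ √17`, maximise `v` over `{|x| ≥ √17, |x₁| ≤ a, |x₂| ≤ b}`: the maximum lies neither on
the circle (where `v ≤ 0`) nor on the sides (where `v < v(x₀)`), so it is an interior local
maximum, where `Δv ≤ 0 < (|x|² − 4) v`. -/

open Filter Topology

section SecondDerivative

variable {E : Type*} [NormedAddCommGroup E] [NormedSpace ℝ E]

theorem IsLocalMax.deriv_deriv_nonpos {f : ℝ → ℝ} {x₀ : ℝ} (h : IsLocalMax f x₀)
    (hc : ContinuousAt f x₀) : deriv (deriv f) x₀ ≤ 0 := by
  by_contra! hpos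
  have hmin : IsLocalMin f x₀ := isLocalMin_of_deriv_deriv_pos hpos h.deriv_eq_zero hc
  have hconst : f =ᶠ[𝓝 x₀] fun _ => f x₀ := by
    filter_upwards [h, hmin] with x hmax hmin using le_antisymm hmax hmin
  have hderiv : deriv f =ᶠ[𝓝 x₀] fun _ => 0 := by
    filter_upwards [hconst.eventuallyEq_nhds] with x hx
    rw [hx.deriv_eq, deriv_const]
  rw [hderiv.deriv_eq, deriv_const] at hpos
  exact lt_irrefl _ hpos

theorem IsLocalMax.fderiv_fderiv_apply_nonpos {v : E → ℝ} (hv : ContDiff ℝ 2 v) {x : E}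
    (h : IsLocalMax v x) (e : E) : fderiv ℝ (fun y => fderiv ℝ v y e) x e ≤ 0 := by
  let L : ℝ → E := fun t => x + t • e
  have hL : ∀ t, HasDerivAt L e t := fun t => by
    simpa only [id, one_smul] using ((hasDerivAt_id t).smul_const e).const_add x
  have hL0 : L 0 = x := by simp [L]
  have hdv : Differentiable ℝ v := hv.differentiable (by norm_num)
  have hD1 : Differentiable ℝ (fun y => fderiv ℝ v y e) :=
    ((hv.fderiv_right (m := 1) (by norm_num)).clm_apply contDiff_const).differentiable one_ne_zero
  have hderiv : deriv (v ∘ L) = fun t => fderiv ℝ v (L t) e := funext fun t =>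
    ((hdv (L t)).hasFDerivAt.comp_hasDerivAt t (hL t)).deriv
  have hderiv2 : deriv (deriv (v ∘ L)) 0 = fderiv ℝ (fun y => fderiv ℝ v y e) x e := by
    rw [hderiv, ← hL0]
    exact ((hD1 (L 0)).hasFDerivAt.comp_hasDerivAt 0 (hL 0)).deriv
  have hmax : IsLocalMax (v ∘ L) 0 := by
    rw [← hL0] at h
    exact h.comp_continuous (hL 0).continuousAt
  rw [← hderiv2]
  exact hmax.deriv_deriv_nonpos (hdv.continuous.continuousAt.comp (hL 0).continuousAt)

end SecondDerivative

theorem lap_nonpos_of_isLocalMax {v : E2 → ℝ} (hv : ContDiff ℝ 2 v) {x : E2}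
    (h : IsLocalMax v x) : lap v x ≤ 0 :=
  Finset.sum_nonpos fun i _ => h.fderiv_fderiv_apply_nonpos hv (std i)

theorem exists_gt_abs_lt_of_integrable {f : ℝ → ℝ} (hf : Integrable f) {P : ℝ → Prop}
    (hP : ∀ᵐ t, P t) {ε : ℝ} (hε : 0 < ε) (R₀ : ℝ) : ∃ t > R₀, P t ∧ |f t| < ε := by
  by_contra! H
  have hsub : Ioi R₀ ⊆ {t | ε ≤ ‖f t‖} ∪ {t | ¬P t} := fun t ht => by
    by_cases hPt : P t
    · exact Or.inl (H t ht hPt)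
    · exact Or.inr hPt
  have hfin : volume ({t | ε ≤ ‖f t‖} ∪ {t | ¬P t}) < ⊤ :=
    (measure_union_le _ _).trans_lt <| by
      rw [ae_iff.mp hP, add_zero]
      exact hf.measure_norm_ge_lt_top hε
  exact absurd ((measure_mono hsub).trans_lt hfin) (by simp)

theorem exists_gt_integral_slice_lt {f : ℝ × ℝ → ℝ} (hf : Integrable f) {ε : ℝ} (hε : 0 < ε)
    (R₀ : ℝ) : ∃ t > R₀, ∀ σ, |σ| = t →
      Integrable (fun s => f (σ, s)) ∧ ∫ s, f (σ, s) < ε := by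
  rw [Measure.volume_eq_prod] at hf
  have hflip : MeasurePreserving (Prod.map Neg.neg id : ℝ × ℝ → ℝ × ℝ)
      (volume.prod volume) (volume.prod volume) :=
    (Measure.measurePreserving_neg volume).prod (MeasurePreserving.id volume)
  have hf' : Integrable (f ∘ Prod.map Neg.neg id) (volume.prod volume) :=
    hflip.integrable_comp_of_integrable hf
  obtain ⟨t, ht, ⟨hint, hint'⟩, hsmall⟩ := exists_gt_abs_lt_of_integrable
    (hf.integral_prod_left.abs.add hf'.integral_prod_left.abs)
    (hf.prod_right_ae.and hf'.prod_right_ae) hε (max R₀ 0)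
  simp only [Pi.add_apply, Function.comp_apply, Prod.map_apply, id] at hsmall hint'
  rw [abs_of_nonneg (by positivity)] at hsmall
  have h_at_t : |∫ s, f (t, s)| < ε := by linarith [abs_nonneg (∫ s, f (-t, s))]
  have h_at_neg_t : |∫ s, f (-t, s)| < ε := by linarith [abs_nonneg (∫ s, f (t, s))]
  refine ⟨t, (le_max_left _ _).trans_lt ht, fun σ hσ => ?_⟩
  rcases (abs_eq ((le_max_right _ _).trans ht.le)).mp hσ with rfl | rfl
  · exact ⟨hint, (le_abs_self _).trans_lt h_at_t⟩
  · exact ⟨hint', (le_abs_self _).trans_lt h_at_neg_t⟩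

section LineBound

variable {E : Type*} [NormedAddCommGroup E] [NormedSpace ℝ E]

theorem sq_le_integral_of_hasDerivAt {u u' H : ℝ → ℝ} (hu : ∀ s, HasDerivAt u (u' s) s)
    (hu' : Continuous u') (hH : Integrable H) (hle : ∀ s, u s ^ 2 + u' s ^ 2 ≤ H s) (y : ℝ) :
    u y ^ 2 ≤ ∫ s, H s := by
  have hsq : ∀ s, HasDerivAt (fun s => u s ^ 2) (2 * u s * u' s) s := fun s => by
    simpa using (hu s).fun_pow 2
  have hu_cont : Continuous u := continuous_iff_continuousAt.mpr fun s => (hu s).continuousAt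
  have hH_nonneg : ∀ s, 0 ≤ H s := fun s => (by positivity : 0 ≤ u s ^ 2 + u' s ^ 2).trans (hle s)
  have hderiv_le : ∀ s, |2 * u s * u' s| ≤ H s := fun s => by
    rw [abs_le]
    constructor <;> nlinarith [sq_nonneg (u s + u' s), sq_nonneg (u s - u' s), hle s]
  have hsq_int : Integrable fun s => u s ^ 2 :=
    hH.mono' (hu_cont.pow 2).aestronglyMeasurable (.of_forall fun s => by
      rw [Real.norm_eq_abs, abs_of_nonneg (sq_nonneg _)]
      linarith [hle s, sq_nonneg (u' s)])
  have hderiv_int : Integrable fun s => 2 * u s * u' s :=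
    hH.mono' ((continuous_const.mul hu_cont).mul hu').aestronglyMeasurable
      (.of_forall hderiv_le)
  have hlim : Tendsto (fun s => u s ^ 2) atBot (𝓝 0) :=
    tendsto_zero_of_hasDerivAt_of_integrableOn_Iic (a := y) (fun s _ => hsq s)
      hderiv_int.integrableOn hsq_int.integrableOn
  calc u y ^ 2 = ∫ s in Iic y, 2 * u s * u' s := by
        rw [integral_Iic_of_hasDerivAt_of_tendsto' (fun s _ => hsq s) hderiv_int.integrableOn hlim,
          sub_zero]
    _ ≤ ∫ s in Iic y, H s :=
        setIntegral_mono hderiv_int.integrableOn hH.integrableOn fun s =>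
          (le_abs_self _).trans (hderiv_le s)
    _ ≤ ∫ s, H s := setIntegral_le_integral hH (.of_forall hH_nonneg)

theorem sq_le_integral_along_line {v : E → ℝ} (hv : ContDiff ℝ 1 v) {L : ℝ → E} {d : E}
    (hL : ∀ s, HasDerivAt L d s) (hd : ‖d‖ ≤ 1)
    (hint : Integrable fun s => v (L s) ^ 2 + ‖fderiv ℝ v (L s)‖ ^ 2) (y : ℝ) :
    v (L y) ^ 2 ≤ ∫ s, (v (L s) ^ 2 + ‖fderiv ℝ v (L s)‖ ^ 2) := by
  have hL_cont : Continuous L := continuous_iff_continuousAt.mpr fun s => (hL s).continuousAt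
  refine sq_le_integral_of_hasDerivAt (u := fun s => v (L s)) (u' := fun s => fderiv ℝ v (L s) d)
    (fun s => ((hv.differentiable one_ne_zero (L s)).hasFDerivAt.comp_hasDerivAt s (hL s)))
    (((hv.continuous_fderiv one_ne_zero).comp hL_cont).clm_apply continuous_const) hint
    (fun s => add_le_add_right ?_ _) y
  calc (fderiv ℝ v (L s) d) ^ 2 ≤ (‖fderiv ℝ v (L s)‖ * ‖d‖) ^ 2 :=
        sq_le_sq' (abs_le.mp ((fderiv ℝ v (L s)).le_opNorm d)).1
          (abs_le.mp ((fderiv ℝ v (L s)).le_opNorm d)).2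
    _ ≤ ‖fderiv ℝ v (L s)‖ ^ 2 := by
        gcongr
        exact mul_le_of_le_one_right (norm_nonneg _) hd

end LineBound

def planeOfCoords (q : ℝ × ℝ) : E2 := q.1 • std 0 + q.2 • std 1

theorem planeOfCoords_coords (z : E2) : planeOfCoords (z 0, z 1) = z := by
  ext i
  fin_cases i <;> simp [planeOfCoords, std]

theorem measurePreserving_planeOfCoords : MeasurePreserving planeOfCoords := by
  have hcoords : planeOfCoords =
      MeasurableEquiv.toLp 2 (Fin 2 → ℝ) ∘ MeasurableEquiv.finTwoArrow.symm := by
    ext q i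
    fin_cases i <;> simp [planeOfCoords, std, MeasurableEquiv.finTwoArrow]
  rw [hcoords]
  exact (EuclideanSpace.volume_preserving_symm_measurableEquiv_toLp (Fin 2)).symm.comp
    (volume_preserving_finTwoArrow ℝ).symm

theorem hasDerivAt_planeOfCoords_fst (b s : ℝ) :
    HasDerivAt (fun s => planeOfCoords (s, b)) (std 0) s := by
  simpa only [planeOfCoords, id, one_smul] using
    ((hasDerivAt_id s).smul_const (std 0)).add_const (b • std 1)

theorem hasDerivAt_planeOfCoords_snd (a s : ℝ) :
    HasDerivAt (fun s => planeOfCoords (a, s)) (std 1) s := by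
  simpa only [planeOfCoords, id, one_smul] using
    ((hasDerivAt_id s).smul_const (std 1)).const_add (a • std 0)

theorem norm_std (i : Fin 2) : ‖std i‖ = 1 := by simp [std]

theorem exists_gt_sq_lt_of_abs_coord_eq {v : E2 → ℝ} (hv : ContDiff ℝ 1 v)
    (hint : Integrable fun x => v x ^ 2 + ‖fderiv ℝ v x‖ ^ 2) {ε : ℝ} (hε : 0 < ε) (R₀ : ℝ)
    (i : Fin 2) : ∃ a > R₀, ∀ z : E2, |z i| = a → v z ^ 2 < ε := by
  have hf : Integrable fun q => v (planeOfCoords q) ^ 2 + ‖fderiv ℝ v (planeOfCoords q)‖ ^ 2 :=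
    measurePreserving_planeOfCoords.integrable_comp_of_integrable hint
  fin_cases i
  · obtain ⟨a, ha, hslice⟩ := exists_gt_integral_slice_lt hf hε R₀
    refine ⟨a, ha, fun z hz => ?_⟩
    obtain ⟨hslice_int, hlt⟩ := hslice (z 0) hz
    have := sq_le_integral_along_line hv (hasDerivAt_planeOfCoords_snd (z 0))
      (norm_std 1).le hslice_int (z 1)
    rw [planeOfCoords_coords] at this
    exact this.trans_lt hlt
  · obtain ⟨b, hb, hslice⟩ := exists_gt_integral_slice_lt
      (by rw [Measure.volume_eq_prod] at hf ⊢; exact hf.swap) hε R₀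
    refine ⟨b, hb, fun z hz => ?_⟩
    obtain ⟨hslice_int, hlt⟩ := hslice (z 1) hz
    have := sq_le_integral_along_line hv (hasDerivAt_planeOfCoords_fst (z 1))
      (norm_std 0).le hslice_int (z 0)
    rw [planeOfCoords_coords] at this
    exact this.trans_lt hlt

theorem continuous_abs_coord (i : Fin 2) : Continuous fun z : E2 => |z i| :=
  (EuclideanSpace.proj (𝕜 := ℝ) i).continuous.abs

theorem isCompact_annulus_box (r a b : ℝ) :
    IsCompact {z : E2 | r ≤ ‖z‖ ∧ |z 0| ≤ a ∧ |z 1| ≤ b} := by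
  refine Metric.isCompact_of_isClosed_isBounded ?_ ?_
  · exact (isClosed_le continuous_const continuous_norm).inter
      ((isClosed_le (continuous_abs_coord 0) continuous_const).inter
        (isClosed_le (continuous_abs_coord 1) continuous_const))
  · refine (Metric.isBounded_closedBall (x := (0 : E2)) (r := a + b)).subset fun z hz => ?_
    have hnorm : ‖z‖ ^ 2 = |z 0| ^ 2 + |z 1| ^ 2 := by
      simp [EuclideanSpace.norm_sq_eq, Fin.sum_univ_two]
    rw [Metric.mem_closedBall, dist_zero_right]
    nlinarith [hz.2.1, hz.2.2, abs_nonneg (z 0), abs_nonneg (z 1), norm_nonneg z]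

/-- Maximum principle for the quantum harmonic oscillator on the exterior of
the disk of radius `√17`: if `v ∈ C² ∩ H²(ℝ²)`, `Δv ≥ (|x|² − 4)v` for `|x| ≥ √17` and
`v ≤ 0` on `{|x| = √17}`, then `v ≤ 0` on `{|x| ≥ √17}`. -/
theorem stmt3 (v : E2 → ℝ) (hreg : ContDiff ℝ 2 v)
    (hH2 : MemH2On v Set.univ)
    (hsub : ∀ x : E2, Real.sqrt 17 ≤ ‖x‖ → (‖x‖^2 - 4) * v x ≤ lap v x)
    (hbd : ∀ x : E2, ‖x‖ = Real.sqrt 17 → v x ≤ 0) :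
    ∀ x : E2, Real.sqrt 17 ≤ ‖x‖ → v x ≤ 0 := by
  have hint : Integrable fun x => v x ^ 2 + ‖fderiv ℝ v x‖ ^ 2 := by
    obtain ⟨hv, hdv, -⟩ := hH2
    rw [Measure.restrict_univ] at hv hdv
    exact hv.integrable_sq.add hdv.integrable_sq
  intro x₀ hx₀
  by_contra! hpos
  have hC1 : ContDiff ℝ 1 v := hreg.of_le one_le_two
  obtain ⟨a, ha, ha_side⟩ := exists_gt_sq_lt_of_abs_coord_eq hC1 hint (pow_pos hpos 2) ‖x₀‖ 0
  obtain ⟨b, hb, hb_side⟩ := exists_gt_sq_lt_of_abs_coord_eq hC1 hint (pow_pos hpos 2) ‖x₀‖ 1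
  set K := {z : E2 | √17 ≤ ‖z‖ ∧ |z 0| ≤ a ∧ |z 1| ≤ b}
  have hx₀K : x₀ ∈ K :=
    ⟨hx₀, (PiLp.norm_apply_le x₀ 0).trans ha.le, (PiLp.norm_apply_le x₀ 1).trans hb.le⟩
  obtain ⟨z, ⟨hz17, hza, hzb⟩, hzmax⟩ := (isCompact_annulus_box _ a b).exists_isMaxOn ⟨x₀, hx₀K⟩
    (hreg.continuous.continuousOn)
  have hvz : v x₀ ≤ v z := hzmax hx₀K
  have hside : v z ^ 2 < v x₀ ^ 2 → False := fun h => by nlinarith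
  rcases hz17.eq_or_lt with h17 | h17
  · linarith [hbd z h17.symm]
  rcases hza.eq_or_lt with hza | hza
  · exact hside (ha_side z hza)
  rcases hzb.eq_or_lt with hzb | hzb
  · exact hside (hb_side z hzb)
  have hK : K ∈ 𝓝 z := by
    filter_upwards [continuousAt_const.eventually_lt continuous_norm.continuousAt h17,
      (continuous_abs_coord 0).continuousAt.eventually_lt continuousAt_const hza,
      (continuous_abs_coord 1).continuousAt.eventually_lt continuousAt_const hzb]
      with w h17 hwa hwb using ⟨h17.le, hwa.le, hwb.le⟩
  have hlap := lap_nonpos_of_isLocalMax hreg (hzmax.isLocalMax hK)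
  have hz_sq : 17 < ‖z‖ ^ 2 := by
    simpa using pow_lt_pow_left₀ h17 (Real.sqrt_nonneg 17) two_ne_zero
  nlinarith [hsub z hz17]

end
end

section
/- Let R > 0, M ≥ 0, and let u : [R,∞) → ℝ be C¹. Define w(r) := −r·u'(r) + u(r) and suppose |w(r)| ≤ M/r for all r ≥ R. Then the limit c := lim_{r→∞} u(r)/r exists, it equals u(R)/R − ∫_R^∞ w(s)/s² ds, and for every r ≥ R one has u(r) = c·r + r·∫_r^∞ w(s)/s² ds; in particular |u(r) − c·r| ≤ M/(2r) for all r ≥ R. -/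
open MeasureTheory Real Set Filter

/-!
Along a ray the equation `-r u' + u = w` says `(u / r)' = -w / r²`, so
`u(r) / r = u(R) / R - ∫_R^r w / s²`. The decay `|w| ≤ M / r` makes `w / s²` integrable
near infinity with tail `|∫_r^∞ w / s²| ≤ M / (2 r²)`; hence `u(r) / r` converges and its
deviation from the limit is the tail integral.
-/

lemma const_mul_rpow_neg_three {M s : ℝ} : M * s ^ (-(3 : ℕ) : ℝ) = M / s ^ 3 := by
  rw [rpow_neg_natCast, zpow_neg, zpow_natCast, div_eq_mul_inv]

lemma integrableOn_Ioi_const_div_pow_three (M : ℝ) {r : ℝ} (hr : 0 < r) :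
    IntegrableOn (fun s : ℝ => M / s ^ 3) (Ioi r) :=
  IntegrableOn.congr_fun (f := fun s => M * s ^ (-(3 : ℕ) : ℝ))
    ((integrableOn_Ioi_rpow_of_lt (by norm_num) hr).const_mul M)
    (fun _ _ => const_mul_rpow_neg_three) measurableSet_Ioi

lemma integral_Ioi_const_div_pow_three (M : ℝ) {r : ℝ} (hr : 0 < r) :
    ∫ s in Ioi r, M / s ^ 3 = M / (2 * r ^ 2) := by
  simp_rw [← const_mul_rpow_neg_three]
  rw [integral_const_mul, integral_Ioi_rpow_of_lt (by norm_num) hr,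
    show (-(3 : ℕ) : ℝ) + 1 = -(2 : ℕ) by norm_num, rpow_neg_natCast, zpow_neg, zpow_natCast]
  field_simp
  norm_num

lemma integrableOn_Ioi_of_abs_le_div_pow_three {f : ℝ → ℝ} {r M : ℝ} (hr : 0 < r)
    (hf : AEStronglyMeasurable f (volume.restrict (Ioi r)))
    (hbound : ∀ s ∈ Ioi r, |f s| ≤ M / s ^ 3) :
    IntegrableOn f (Ioi r) :=
  (integrableOn_Ioi_const_div_pow_three M hr).mono' hf <|
    (ae_restrict_mem measurableSet_Ioi).mono hbound

lemma abs_integral_Ioi_le_of_abs_le_div_pow_three {f : ℝ → ℝ} {r M : ℝ} (hr : 0 < r)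
    (hbound : ∀ s ∈ Ioi r, |f s| ≤ M / s ^ 3) :
    |∫ s in Ioi r, f s| ≤ M / (2 * r ^ 2) := by
  rw [← integral_Ioi_const_div_pow_three M hr]
  exact norm_integral_le_of_norm_le (integrableOn_Ioi_const_div_pow_three M hr) <|
    (ae_restrict_mem measurableSet_Ioi).mono fun s hs => (norm_eq_abs (f s)).trans_le (hbound s hs)

lemma abs_div_sq_le_div_pow_three {w M s : ℝ} (hs : 0 < s) (hw : |w| ≤ M / s) :
    |w / s ^ 2| ≤ M / s ^ 3 :=
  calc |w / s ^ 2| = |w| / s ^ 2 := by rw [abs_div, abs_of_pos (pow_pos hs 2)]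
    _ ≤ M / s / s ^ 2 := by gcongr
    _ = M / s ^ 3 := by rw [div_div]; ring

lemma HasDerivWithinAt.div_id {u : ℝ → ℝ} {u' x : ℝ} {s : Set ℝ}
    (hu : HasDerivWithinAt u u' s x) (hx : x ≠ 0) :
    HasDerivWithinAt (fun y => u y / y) (-(-x * u' + u x) / x ^ 2) s x :=
  (hu.div (hasDerivWithinAt_id x s) hx).congr_deriv (by simp only [id]; ring)

lemma continuousOn_radial_integrand {R : ℝ} {u du : ℝ → ℝ} (hR : 0 < R)
    (hder : ∀ r ∈ Ici R, HasDerivWithinAt u (du r) (Ici R) r)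
    (hcont : ContinuousOn du (Ici R)) :
    ContinuousOn (fun s => (-s * du s + u s) / s ^ 2) (Ici R) := by
  have hu : ContinuousOn u (Ici R) := fun r hr => (hder r hr).continuousWithinAt
  exact ((continuousOn_id.neg.mul hcont).add hu).div (continuousOn_pow 2) fun s hs =>
    pow_ne_zero 2 (hR.trans_le hs).ne'

lemma div_id_eq_sub_intervalIntegral {R : ℝ} {u du : ℝ → ℝ} (hR : 0 < R)
    (hder : ∀ r ∈ Ici R, HasDerivWithinAt u (du r) (Ici R) r)
    (hcont : ContinuousOn du (Ici R)) {r : ℝ} (hr : R ≤ r) :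
    u r / r = u R / R - ∫ s in R..r, (-s * du s + u s) / s ^ 2 := by
  have hftc : ∫ s in R..r, -((-s * du s + u s) / s ^ 2) = u r / r - u R / R := by
    refine intervalIntegral.integral_eq_sub_of_hasDeriv_right_of_le hr
      (fun x hx => ((hder x hx.1).div_id (hR.trans_le hx.1).ne').continuousWithinAt.mono
        Icc_subset_Ici_self) (fun x hx => ?_) ?_
    · rw [neg_div']
      exact ((hder x hx.1.le).div_id (hR.trans hx.1).ne').mono
        fun s hs => hx.1.le.trans hs.le
    · exact ContinuousOn.intervalIntegrable_of_Icc hr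
        ((continuousOn_radial_integrand hR hder hcont).neg.mono Icc_subset_Ici_self)
  rw [intervalIntegral.integral_neg] at hftc
  linarith

theorem stmt10_general (R M : ℝ) (hR : 0 < R)
    (u du : ℝ → ℝ)
    (hder : ∀ r ∈ Set.Ici R, HasDerivWithinAt u (du r) (Set.Ici R) r)
    (hcont : ContinuousOn du (Set.Ici R))
    (hw : ∀ r, R ≤ r → |(-r * du r + u r)| ≤ M / r) :
    Filter.Tendsto (fun r => u r / r) Filter.atTop
      (nhds (u R / R - ∫ s in Set.Ioi R, (-s * du s + u s) / s ^ 2)) ∧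
    (∀ r, R ≤ r →
      u r = (u R / R - ∫ s in Set.Ioi R, (-s * du s + u s) / s ^ 2) * r
        + r * ∫ s in Set.Ioi r, (-s * du s + u s) / s ^ 2) ∧
    (∀ r, R ≤ r →
      |u r - (u R / R - ∫ s in Set.Ioi R, (-s * du s + u s) / s ^ 2) * r| ≤ M / (2 * r)) := by
  set f : ℝ → ℝ := fun s => (-s * du s + u s) / s ^ 2
  have hbound : ∀ r, R ≤ r → ∀ s ∈ Ioi r, |f s| ≤ M / s ^ 3 := fun r hr s hs =>
    abs_div_sq_le_div_pow_three (hR.trans_le (hr.trans hs.le)) (hw s (hr.trans hs.le))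
  have hint : IntegrableOn f (Ioi R) := integrableOn_Ioi_of_abs_le_div_pow_three hR
    (((continuousOn_radial_integrand hR hder hcont).mono Ioi_subset_Ici_self).aestronglyMeasurable
      measurableSet_Ioi) (hbound R le_rfl)
  have hdecomp : ∀ r, R ≤ r →
      u r = (u R / R - ∫ s in Ioi R, f s) * r + r * ∫ s in Ioi r, f s := fun r hr => by
    have hr0 : r ≠ 0 := (hR.trans_le hr).ne'
    have := div_id_eq_sub_intervalIntegral hR hder hcont hr
    rw [← intervalIntegral.integral_Ioi_sub_Ioi hint hr, div_eq_iff hr0] at this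
    linear_combination this
  refine ⟨?_, hdecomp, fun r hr => ?_⟩
  · refine (tendsto_const_nhds.sub
      (intervalIntegral_tendsto_integral_Ioi R hint tendsto_id)).congr' ?_
    filter_upwards [eventually_ge_atTop R] with r hr
    exact (div_id_eq_sub_intervalIntegral hR hder hcont hr).symm
  · have hr0 : 0 < r := hR.trans_le hr
    calc |u r - (u R / R - ∫ s in Ioi R, f s) * r| = r * |∫ s in Ioi r, f s| := by
          rw [hdecomp r hr, add_sub_cancel_left, abs_mul, abs_of_pos hr0]
      _ ≤ r * (M / (2 * r ^ 2)) := by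
          gcongr
          exact abs_integral_Ioi_le_of_abs_le_div_pow_three hr0 (hbound r hr)
      _ = M / (2 * r) := by field_simp

/-- Radial integration step in the Liouville decomposition: if `u` is `C¹` on
`[R,∞)` and `w(r) := −r·u'(r) + u(r)` satisfies `|w(r)| ≤ M/r`, then `c := lim_{r→∞} u(r)/r`
exists, equals `u(R)/R − ∫_R^∞ w(s)/s² ds`, and `u(r) = c·r + r·∫_r^∞ w(s)/s² ds`; in
particular `|u(r) − c·r| ≤ M/(2r)` for all `r ≥ R`. -/
theorem stmt10 (R M : ℝ) (hR : 0 < R) (hM : 0 ≤ M)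
    (u du : ℝ → ℝ)
    (hder : ∀ r ∈ Set.Ici R, HasDerivWithinAt u (du r) (Set.Ici R) r)
    (hcont : ContinuousOn du (Set.Ici R))
    (hw : ∀ r, R ≤ r → |(-r * du r + u r)| ≤ M / r) :
    Filter.Tendsto (fun r => u r / r) Filter.atTop
      (nhds (u R / R - ∫ s in Set.Ioi R, (-s * du s + u s) / s ^ 2)) ∧
    (∀ r, R ≤ r →
      u r = (u R / R - ∫ s in Set.Ioi R, (-s * du s + u s) / s ^ 2) * r
        + r * ∫ s in Set.Ioi r, (-s * du s + u s) / s ^ 2) ∧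
    (∀ r, R ≤ r →
      |u r - (u R / R - ∫ s in Set.Ioi R, (-s * du s + u s) / s ^ 2) * r| ≤ M / (2 * r)) :=
  stmt10_general R M hR u du hder hcont hw
end

section
/- Let R ∈ {√2, 2} and let B̄_R ⊂ ℝ² be the closed disk of radius R about the origin. If u : B̄_R → ℝ is continuous on B̄_R, C² on the open disk, satisfies Δu(x) − (|x|²/16)·u(x) + u(x) = 0 for all |x| < R, and u = 0 on the boundary circle {|x| = R}, then u ≡ 0. That is, the operator Δ − |x|²/16 + 1 (the stability operator of a flat plane through the origin as a minimal surface in the Gaussian metric e^{−|x|²/4}δ, up to the conformal factor) has trivial Dirichlet kernel on the disks of radius √2 and 2. -/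
/-!
Maximum principle with a positive strict supersolution. On `[-2, 2]² ⊇ B̄_2` the function
`w(x) = cos (3 x₀ / 4) cos (3 x₁ / 4)` is positive and satisfies `Δw + (1 - |x|²/16) w < 0`.
If `u / w` had a positive maximum `M` on `B̄_R`, it would be attained at an interior point `x₀`
(`u` vanishes on the boundary), where `u - M w` has a local maximum, so
`0 ≥ Δ(u - M w)(x₀) > -(1 - |x₀|²/16)(u - M w)(x₀) = 0`. Hence `u ≤ 0`, and likewise `-u ≤ 0`.
-/

open MeasureTheory Real Set Metric

noncomputable section

open Filter Topology

theorem IsLocalMax.deriv_deriv_nonpos_s16 {g : ℝ → ℝ} {t : ℝ} (hmax : IsLocalMax g t)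
    (hcont : ContinuousAt g t) : deriv (deriv g) t ≤ 0 := by
  by_contra! hpos
  -- A point that is both a local max and a local min has `g` locally constant around it.
  have hmin : IsLocalMin g t := isLocalMin_of_deriv_deriv_pos hpos hmax.deriv_eq_zero hcont
  have hconst : g =ᶠ[𝓝 t] fun _ => g t := by
    filter_upwards [hmax, hmin] with s hs₁ hs₂
    exact le_antisymm hs₁ hs₂
  have : deriv (deriv g) t = 0 := by
    rw [hconst.deriv.deriv_eq]
    simp
  exact hpos.ne' this

section NormedSpace

variable {E : Type*} [NormedAddCommGroup E] [NormedSpace ℝ E]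

theorem ContDiffAt.differentiableAt_fderiv_apply {f : E → ℝ} {x : E} (hf : ContDiffAt ℝ 2 f x)
    (v : E) : DifferentiableAt ℝ (fun y => fderiv ℝ f y v) x :=
  ((hf.fderiv_right (m := 1) (by norm_num)).clm_apply contDiffAt_const).differentiableAt
    one_ne_zero

theorem IsLocalMax.fderiv_fderiv_apply_self_nonpos {f : E → ℝ} {x : E} (hmax : IsLocalMax f x)
    (hf : ContDiffAt ℝ 2 f x) (v : E) : fderiv ℝ (fun y => fderiv ℝ f y v) x v ≤ 0 := by
  let γ : ℝ → E := fun t => x + t • v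
  have hγ0 : γ 0 = x := by simp [γ]
  have hγ : ∀ t, HasDerivAt γ v t := fun t => by
    simpa only [one_smul] using ((hasDerivAt_id' t).smul_const v).const_add x
  have hγ_tendsto : Tendsto γ (𝓝 0) (𝓝 x) := hγ0 ▸ (hγ 0).continuousAt.tendsto
  have hderiv : deriv (f ∘ γ) =ᶠ[𝓝 0] (fun y => fderiv ℝ f y v) ∘ γ := by
    filter_upwards [hγ_tendsto.eventually (hf.eventually (by simp))] with t ht
    exact ((ht.differentiableAt two_ne_zero).hasFDerivAt.comp_hasDerivAt t (hγ t)).deriv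
  have hderiv2 : HasDerivAt ((fun y => fderiv ℝ f y v) ∘ γ)
      (fderiv ℝ (fun y => fderiv ℝ f y v) x v) 0 := by
    have hD := (hf.differentiableAt_fderiv_apply v).hasFDerivAt
    rw [← hγ0] at hD ⊢
    exact hD.comp_hasDerivAt 0 (hγ 0)
  have hmax_γ : IsLocalMax (f ∘ γ) 0 := by
    rw [IsLocalMax, IsMaxFilter, Function.comp_apply, hγ0]
    exact hγ_tendsto.eventually hmax
  have hcont_γ : ContinuousAt (f ∘ γ) 0 := by
    rw [← hγ0] at hf
    exact hf.continuousAt.comp (hγ 0).continuousAt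
  rw [← hderiv2.deriv, ← hderiv.deriv_eq]
  exact hmax_γ.deriv_deriv_nonpos_s16 hcont_γ

end NormedSpace

theorem IsLocalMax.lap_nonpos {f : E2 → ℝ} {x : E2} (hmax : IsLocalMax f x)
    (hf : ContDiffAt ℝ 2 f x) : lap f x ≤ 0 :=
  Finset.sum_nonpos fun i _ => hmax.fderiv_fderiv_apply_self_nonpos hf (std i)

theorem D1_sub {f g : E2 → ℝ} {x : E2} (hf : DifferentiableAt ℝ f x)
    (hg : DifferentiableAt ℝ g x) (i : Fin 2) : D1 (f - g) i x = D1 f i x - D1 g i x := by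
  simp [D1, fderiv_sub hf hg]

theorem lap_sub {f g : E2 → ℝ} {x : E2} (hf : ContDiffAt ℝ 2 f x) (hg : ContDiffAt ℝ 2 g x) :
    lap (f - g) x = lap f x - lap g x := by
  simp only [lap, D2, ← Finset.sum_sub_distrib]
  refine Finset.sum_congr rfl fun i _ => ?_
  have hD1 : D1 (f - g) i =ᶠ[𝓝 x] D1 f i - D1 g i := by
    filter_upwards [hf.eventually (by simp), hg.eventually (by simp)] with y hfy hgy
    exact D1_sub (hfy.differentiableAt two_ne_zero) (hgy.differentiableAt two_ne_zero) i
  have hDf : DifferentiableAt ℝ (D1 f i) x := hf.differentiableAt_fderiv_apply (std i)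
  have hDg : DifferentiableAt ℝ (D1 g i) x := hg.differentiableAt_fderiv_apply (std i)
  rw [hD1.fderiv_eq, fderiv_sub hDf hDg]
  rfl

theorem D1_const_smul (c : ℝ) (f : E2 → ℝ) (i : Fin 2) : D1 (c • f) i = c • D1 f i := by
  ext x
  simp [D1, fderiv_const_smul_field]

theorem lap_const_smul (c : ℝ) (f : E2 → ℝ) (x : E2) : lap (c • f) x = c * lap f x := by
  simp only [lap, D2, D1_const_smul, fderiv_const_smul_field, Finset.mul_sum]
  rfl

theorem lap_neg (f : E2 → ℝ) (x : E2) : lap (-f) x = -lap f x := by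
  simpa using lap_const_smul (-1) f x

theorem nonpos_of_pos_strict_supersolution {K : Set E2} (hK : IsCompact K) {c u w : E2 → ℝ}
    (hu_cont : ContinuousOn u K) (hu_reg : ContDiffOn ℝ 2 u (interior K))
    (hu_sub : ∀ x ∈ interior K, 0 ≤ lap u x + c x * u x)
    (hu_bdry : ∀ x ∈ K \ interior K, u x ≤ 0)
    (hw_cont : ContinuousOn w K) (hw_reg : ContDiffOn ℝ 2 w (interior K))
    (hw_pos : ∀ x ∈ K, 0 < w x)
    (hw_super : ∀ x ∈ interior K, lap w x + c x * w x < 0) :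
    ∀ x ∈ K, u x ≤ 0 := by
  intro x hx
  obtain ⟨x₀, hx₀, hmax⟩ := hK.exists_isMaxOn ⟨x, hx⟩
    (hu_cont.div hw_cont fun y hy => (hw_pos y hy).ne')
  set M := u x₀ / w x₀
  have hle : ∀ y ∈ K, u y ≤ M * w y := fun y hy =>
    (div_le_iff₀ (hw_pos y hy)).mp (hmax hy)
  suffices hM : M ≤ 0 by nlinarith [hle x hx, hw_pos x hx]
  by_contra! hM
  have hx₀_int : x₀ ∈ interior K := by
    by_contra hx₀_bdry
    exact (div_nonpos_of_nonpos_of_nonneg (hu_bdry x₀ ⟨hx₀, hx₀_bdry⟩)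
      (hw_pos x₀ hx₀).le).not_gt hM
  have hu_x₀ : u x₀ = M * w x₀ := (div_mul_cancel₀ _ (hw_pos x₀ hx₀).ne').symm
  have hlocmax : IsLocalMax (u - M • w) x₀ := by
    filter_upwards [mem_interior_iff_mem_nhds.mp hx₀_int] with y hy
    simp only [Pi.sub_apply, Pi.smul_apply, smul_eq_mul]
    linarith [hle y hy]
  have hnhds := isOpen_interior.mem_nhds hx₀_int
  have hu₂ : ContDiffAt ℝ 2 u x₀ := hu_reg.contDiffAt hnhds
  have hMw₂ : ContDiffAt ℝ 2 (M • w) x₀ := (hw_reg.contDiffAt hnhds).const_smul M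
  have hlap := hlocmax.lap_nonpos (hu₂.sub hMw₂)
  rw [lap_sub hu₂ hMw₂, lap_const_smul] at hlap
  have hsub := hu_sub x₀ hx₀_int
  have hsuper := mul_lt_mul_of_pos_left (hw_super x₀ hx₀_int) hM
  rw [hu_x₀] at hsub
  nlinarith

section Separable

variable {p p' q q' : ℝ → ℝ} (hp : ∀ t, HasDerivAt p (p' t) t) (hq : ∀ t, HasDerivAt q (q' t) t)
include hp hq

theorem hasFDerivAt_separable (x : E2) :
    HasFDerivAt (fun y : E2 => p (y 0) * q (y 1))
      (p (x 0) • q' (x 1) • EuclideanSpace.proj (𝕜 := ℝ) (1 : Fin 2) +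
        q (x 1) • p' (x 0) • EuclideanSpace.proj (𝕜 := ℝ) (0 : Fin 2)) x :=
  ((hp (x 0)).comp_hasFDerivAt x (EuclideanSpace.proj (𝕜 := ℝ) (0 : Fin 2)).hasFDerivAt).mul
    ((hq (x 1)).comp_hasFDerivAt x (EuclideanSpace.proj (𝕜 := ℝ) (1 : Fin 2)).hasFDerivAt)

theorem D1_separable_zero :
    D1 (fun y : E2 => p (y 0) * q (y 1)) 0 = fun y => p' (y 0) * q (y 1) := by
  ext x
  simp [D1, (hasFDerivAt_separable hp hq x).fderiv, std, mul_comm]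

theorem D1_separable_one :
    D1 (fun y : E2 => p (y 0) * q (y 1)) 1 = fun y => p (y 0) * q' (y 1) := by
  ext x
  simp [D1, (hasFDerivAt_separable hp hq x).fderiv, std]

end Separable

theorem lap_separable {p p' p'' q q' q'' : ℝ → ℝ} (hp : ∀ t, HasDerivAt p (p' t) t)
    (hp' : ∀ t, HasDerivAt p' (p'' t) t) (hq : ∀ t, HasDerivAt q (q' t) t)
    (hq' : ∀ t, HasDerivAt q' (q'' t) t) (x : E2) :
    lap (fun y => p (y 0) * q (y 1)) x = p'' (x 0) * q (x 1) + p (x 0) * q'' (x 1) := by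
  rw [lap, Fin.sum_univ_two]
  change D1 (D1 _ 0) 0 x + D1 (D1 _ 1) 1 x = _
  rw [D1_separable_zero hp hq, D1_separable_zero hp' hq, D1_separable_one hp hq,
    D1_separable_one hp hq']

def cosProduct (b : ℝ) (x : E2) : ℝ := cos (b * x 0) * cos (b * x 1)

theorem contDiff_cosProduct (b : ℝ) : ContDiff ℝ 2 (cosProduct b) := by
  unfold cosProduct
  fun_prop

theorem cosProduct_pos {b : ℝ} (hb : 0 ≤ b) {x : E2} (hx : b * ‖x‖ < π / 2) :
    0 < cosProduct b x := by
  have hfactor (i : Fin 2) : 0 < cos (b * x i) := by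
    refine cos_pos_of_mem_Ioo (abs_lt.mp ?_)
    calc |b * x i| = b * ‖x i‖ := by rw [abs_mul, abs_of_nonneg hb, Real.norm_eq_abs]
      _ ≤ b * ‖x‖ := mul_le_mul_of_nonneg_left (PiLp.norm_apply_le x i) hb
      _ < π / 2 := hx
  exact mul_pos (hfactor 0) (hfactor 1)

theorem lap_cosProduct (b : ℝ) (x : E2) : lap (cosProduct b) x = -2 * b ^ 2 * cosProduct b x := by
  have hcos (t : ℝ) : HasDerivAt (fun t => cos (b * t)) (-(b * sin (b * t))) t := by
    simpa [mul_comm] using ((hasDerivAt_id t).const_mul b).cos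
  have hsin (t : ℝ) : HasDerivAt (fun t => -(b * sin (b * t))) (-(b * (b * cos (b * t)))) t := by
    simpa [mul_comm] using (((hasDerivAt_id t).const_mul b).sin.const_mul b).fun_neg
  calc lap (cosProduct b) x = _ := lap_separable hcos hsin hcos hsin x
    _ = -2 * b ^ 2 * cosProduct b x := by rw [cosProduct]; ring

theorem nonpos_of_stability_subsolution {R : ℝ} (hR0 : 0 < R) (hR2 : R ≤ 2) {v : E2 → ℝ}
    (hcont : ContinuousOn v (closedBall (0 : E2) R))
    (hreg : ContDiffOn ℝ 2 v (ball (0 : E2) R))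
    (hsub : ∀ x ∈ ball (0 : E2) R, 0 ≤ lap v x - (‖x‖ ^ 2 / 16) * v x + v x)
    (hbd : ∀ x : E2, ‖x‖ = R → v x ≤ 0) :
    ∀ x ∈ closedBall (0 : E2) R, v x ≤ 0 := by
  have hint : interior (closedBall (0 : E2) R) = ball 0 R := interior_closedBall 0 hR0.ne'
  -- `3 / 2 < π / 2`, and `w = cosProduct (3 / 4)` has `Δw + (1 - |x|²/16) w = -(1/8 + |x|²/16) w`.
  have hw_pos : ∀ x ∈ closedBall (0 : E2) R, 0 < cosProduct (3 / 4) x := fun x hx =>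
    cosProduct_pos (by norm_num) (by linarith [mem_closedBall_zero_iff.mp hx, pi_gt_three])
  rw [← hint] at hreg hsub
  refine nonpos_of_pos_strict_supersolution (isCompact_closedBall 0 R)
    (c := fun x => 1 - ‖x‖ ^ 2 / 16) hcont hreg (fun x hx => by linarith [hsub x hx])
    (fun x hx => hbd x ?_) (contDiff_cosProduct _).continuous.continuousOn
    (contDiff_cosProduct _).contDiffOn hw_pos (fun x hx => ?_)
  · rw [hint, Set.mem_sdiff, mem_closedBall_zero_iff, mem_ball_zero_iff, not_lt] at hx
    exact le_antisymm hx.1 hx.2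
  · have hw := hw_pos x (interior_subset hx)
    rw [lap_cosProduct]
    nlinarith [mul_nonneg (sq_nonneg ‖x‖) hw.le]

/-- The stability operator `Δ − |x|²/16 + 1` of a flat plane through the origin
(as a minimal surface in the Gaussian metric `e^{−|x|²/4}δ`, up to the conformal factor) has
trivial Dirichlet kernel on the disks of radius `√2` and `2`. -/
theorem stmt16 (R : ℝ) (hR : R = Real.sqrt 2 ∨ R = 2) (u : E2 → ℝ)
    (hcont : ContinuousOn u (closedBall (0 : E2) R))
    (hreg : ContDiffOn ℝ 2 u (ball (0 : E2) R))
    (heq : ∀ x ∈ ball (0 : E2) R, lap u x - (‖x‖^2 / 16) * u x + u x = 0)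
    (hbd : ∀ x : E2, ‖x‖ = R → u x = 0) :
    ∀ x ∈ closedBall (0 : E2) R, u x = 0 := by
  have hR0 : 0 < R := by rcases hR with rfl | rfl <;> positivity
  have hR2 : R ≤ 2 := by
    rcases hR with rfl | rfl
    · exact sqrt_le_iff.mpr ⟨by norm_num, by norm_num⟩
    · rfl
  have hu_nonpos := nonpos_of_stability_subsolution hR0 hR2 hcont hreg
    (fun x hx => (heq x hx).ge) (fun x hx => (hbd x hx).le)
  have hu_nonneg := nonpos_of_stability_subsolution hR0 hR2 hcont.neg hreg.neg
    (fun x hx => by simp only [lap_neg, Pi.neg_apply]; linarith [heq x hx])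
    (fun x hx => by simp [hbd x hx])
  intro x hx
  exact le_antisymm (hu_nonpos x hx) (neg_nonpos.mp (hu_nonneg x hx))

end
end

section
/- Let w : (0, π/2] → ℝ be a C² function satisfying the Legendre-type equation w''(φ) + (cos φ / sin φ)·w'(φ) + 4·w(φ) = 0 for all φ ∈ (0, π/2), with boundary behavior w(φ) → 1 and w'(φ) → 0 as φ → 0⁺. Then w(π/2) < 0 and w'(π/2) < 0. (Equivalently, the Legendre function P_l(cos φ) with l = (√17 − 1)/2, the positive root of l(l+1) = 4, is negative and strictly decreasing at φ = π/2.) -/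
open Real Set Filter

noncomputable section

open Topology Polynomial

/-!
Substituting `t = (1 - cos φ) / 2` turns the equation into the hypergeometric equation
`t (1 - t) y'' + (1 - 2t) y' + 4y = 0`, whose regular solution at `t = 0` is a power series. Its
degree-6 truncation `g` solves the equation up to a defect
`(7904/2025) t⁶ ≤ 247/4050` on `[0, π/2]`. For the error `e = w - g` the energy `e'² + 4e²`
satisfies `E' = -2 cot φ · e'² + 2e' · defect ≤ 2 · (247/4050) · √E`, so `√E` grows at rate at
most `247/4050`, starting from `0` at `φ = 0`. At `φ = π/2` this puts `w` and `w'` within `0.05`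
and `0.1` of `g(π/2) ≈ -0.42` and `g'(π/2) ≈ -0.75`.
-/

theorem sqrt_le_mul_sub_of_deriv_le_two_mul_sqrt {F F' : ℝ → ℝ} {a b M : ℝ} (hab : a < b)
    (hM : 0 ≤ M) (hcont : ContinuousOn F (Ioc a b)) (hderiv : ∀ x ∈ Ioo a b, HasDerivAt F (F' x) x)
    (hnonneg : ∀ x ∈ Ioo a b, 0 ≤ F x) (hle : ∀ x ∈ Ioo a b, F' x ≤ 2 * M * √(F x))
    (hlim : Tendsto F (𝓝[>] a) (𝓝 0)) :
    √(F b) ≤ M * (b - a) := by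
  refine le_of_forall_pos_le_add fun ε hε => ?_
  -- `√(F + ε²)` is differentiable even where `F` vanishes, and grows at rate at most `M`.
  set H : ℝ → ℝ := fun x => √(F x + ε ^ 2) - M * x
  have hanti : AntitoneOn H (Ioc a b) := by
    refine antitoneOn_of_hasDerivWithinAt_nonpos (convex_Ioc a b)
      ((hcont.add continuousOn_const).sqrt.sub (continuousOn_const.mul continuousOn_id))
      (fun x hx => ?_) (fun x hx => ?_) (f' := fun x => F' x / (2 * √(F x + ε ^ 2)) - M)
    · rw [interior_Ioc] at hx ⊢
      have hpos : F x + ε ^ 2 ≠ 0 := by nlinarith [hnonneg x hx]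
      exact ((((hderiv x hx).add_const _).sqrt hpos).sub
        ((hasDerivAt_id x).const_mul M |>.congr_deriv (mul_one M))).hasDerivWithinAt
    · rw [interior_Ioc] at hx
      have hroot : 0 < √(F x + ε ^ 2) := Real.sqrt_pos.2 (by nlinarith [hnonneg x hx])
      have : F' x ≤ M * (2 * √(F x + ε ^ 2)) := calc
        F' x ≤ 2 * M * √(F x) := hle x hx
        _ ≤ 2 * M * √(F x + ε ^ 2) := by gcongr; nlinarith
        _ = M * (2 * √(F x + ε ^ 2)) := by ring
      rw [sub_nonpos, div_le_iff₀ (by positivity)]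
      exact this
  have hHlim : Tendsto H (𝓝[>] a) (𝓝 (ε - M * a)) := by
    have h := ((hlim.add_const (ε ^ 2)).sqrt).sub
      (((continuous_id.tendsto a).const_mul M).mono_left nhdsWithin_le_nhds)
    rwa [zero_add, Real.sqrt_sq hε.le] at h
  have hHb : H b ≤ ε - M * a := ge_of_tendsto hHlim <| by
    filter_upwards [Ioc_mem_nhdsGT hab] with x hx
    exact hanti hx (right_mem_Ioc.2 hab) hx.2
  have : √(F b) ≤ √(F b + ε ^ 2) := Real.sqrt_le_sqrt (by nlinarith)
  simp only [H] at hHb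
  linarith

theorem sqrt_energy_le_of_abs_defect_le {e e₁ e₂ c : ℝ → ℝ} {a b k M : ℝ} (hab : a < b)
    (hk : 0 ≤ k) (hM : 0 ≤ M) (hd : ∀ x ∈ Ioc a b, HasDerivWithinAt e (e₁ x) (Ioc a b) x)
    (hd₁ : ∀ x ∈ Ioc a b, HasDerivWithinAt e₁ (e₂ x) (Ioc a b) x) (hc : ∀ x ∈ Ioo a b, 0 ≤ c x)
    (hdefect : ∀ x ∈ Ioo a b, |e₂ x + c x * e₁ x + k * e x| ≤ M)
    (he0 : Tendsto e (𝓝[>] a) (𝓝 0)) (he₁0 : Tendsto e₁ (𝓝[>] a) (𝓝 0)) :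
    √(e₁ b ^ 2 + k * e b ^ 2) ≤ M * (b - a) := by
  have hnhds {x} (hx : x ∈ Ioo a b) : Ioc a b ∈ 𝓝 x :=
    mem_of_superset (isOpen_Ioo.mem_nhds hx) Ioo_subset_Ioc_self
  have hd' {x} (hx : x ∈ Ioo a b) := (hd x (Ioo_subset_Ioc_self hx)).hasDerivAt (hnhds hx)
  have hd₁' {x} (hx : x ∈ Ioo a b) := (hd₁ x (Ioo_subset_Ioc_self hx)).hasDerivAt (hnhds hx)
  refine sqrt_le_mul_sub_of_deriv_le_two_mul_sqrt (F := fun x => e₁ x ^ 2 + k * e x ^ 2) hab hM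
    ((ContinuousOn.pow (fun x hx => (hd₁ x hx).continuousWithinAt) 2).add
      (continuousOn_const.mul (ContinuousOn.pow (fun x hx => (hd x hx).continuousWithinAt) 2)))
    (fun x hx => ((hd₁' hx).pow 2).add (((hd' hx).pow 2).const_mul k)) (fun x _ => by positivity)
    (fun x hx => ?_) (by simpa using (he₁0.pow 2).add ((he0.pow 2).const_mul k))
  set d := e₂ x + c x * e₁ x + k * e x
  -- The damping term `-2 c e₁²` only helps; the defect `d` drives the energy.
  calc _ = 2 * (e₁ x * d) - 2 * c x * e₁ x ^ 2 := by push_cast; ring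
    _ ≤ 2 * (|e₁ x| * M) := by
        have := (le_abs_self _).trans ((abs_mul _ _).trans_le
          (mul_le_mul_of_nonneg_left (hdefect x hx) (abs_nonneg (e₁ x))))
        nlinarith [mul_nonneg (hc x hx) (sq_nonneg (e₁ x))]
    _ ≤ 2 * M * √(e₁ x ^ 2 + k * e x ^ 2) := by
        have : |e₁ x| ≤ √(e₁ x ^ 2 + k * e x ^ 2) := Real.abs_le_sqrt (by nlinarith)
        nlinarith

def hav (φ : ℝ) : ℝ := (1 - cos φ) / 2

theorem hasDerivAt_hav (φ : ℝ) : HasDerivAt hav (sin φ / 2) φ := by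
  have h := ((hasDerivAt_cos φ).const_sub 1).div_const 2
  rw [neg_neg] at h
  exact h

theorem sin_div_two_sq_eq_hav_mul (φ : ℝ) : (sin φ / 2) ^ 2 = hav φ * (1 - hav φ) := by
  simp only [hav]
  nlinarith [sin_sq_add_cos_sq φ]

theorem hav_mem_Icc {φ : ℝ} (hφ : φ ∈ Icc 0 (π / 2)) : hav φ ∈ Icc 0 (1 / 2) := by
  have := cos_nonneg_of_mem_Icc ⟨by linarith [pi_pos, hφ.1], hφ.2⟩
  constructor <;> simp only [hav] <;> linarith [cos_le_one φ]

namespace Polynomial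

variable (P : ℝ[X])

def evalHav (φ : ℝ) : ℝ := P.eval (hav φ)

def evalHavDeriv (φ : ℝ) : ℝ := P.derivative.eval (hav φ) * (sin φ / 2)

def evalHavDeriv2 (φ : ℝ) : ℝ :=
  P.derivative.derivative.eval (hav φ) * (sin φ / 2) ^ 2 + P.derivative.eval (hav φ) * (cos φ / 2)

theorem hasDerivAt_evalHav (φ : ℝ) : HasDerivAt P.evalHav (P.evalHavDeriv φ) φ :=
  (P.hasDerivAt (hav φ)).comp φ (hasDerivAt_hav φ)

theorem hasDerivAt_evalHavDeriv (φ : ℝ) : HasDerivAt P.evalHavDeriv (P.evalHavDeriv2 φ) φ := by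
  refine (((P.derivative.hasDerivAt (hav φ)).comp φ (hasDerivAt_hav φ)).mul
    ((hasDerivAt_sin φ).div_const 2)).congr_deriv ?_
  simp only [evalHavDeriv2, Function.comp_apply]
  ring

theorem continuous_evalHav : Continuous P.evalHav :=
  continuous_iff_continuousAt.2 fun φ => (P.hasDerivAt_evalHav φ).continuousAt

theorem continuous_evalHavDeriv : Continuous P.evalHavDeriv :=
  continuous_iff_continuousAt.2 fun φ => (P.hasDerivAt_evalHavDeriv φ).continuousAt

theorem evalHavDeriv2_add_cot_mul_evalHavDeriv {φ : ℝ} (hφ : sin φ ≠ 0) :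
    P.evalHavDeriv2 φ + cos φ / sin φ * P.evalHavDeriv φ =
      hav φ * (1 - hav φ) * P.derivative.derivative.eval (hav φ) +
        (1 - 2 * hav φ) * P.derivative.eval (hav φ) := by
  rw [evalHavDeriv2, evalHavDeriv, sin_div_two_sq_eq_hav_mul, hav]
  field_simp
  ring

end Polynomial

/-- The Legendre function `P_l(1 - 2t)` with `l (l + 1) = 4` is the hypergeometric series
`∑ aₙ tⁿ` with `a₀ = 1`, `aₙ₊₁ = aₙ (n (n + 1) - 4) / (n + 1)²`; this is its truncation at degree 6. -/
def legendreTruncation : ℝ[X] :=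
  1 - 4 * X + 2 * X ^ 2 + C (4 / 9) * X ^ 3 + C (2 / 9) * X ^ 4 + C (32 / 225) * X ^ 5 +
    C (208 / 2025) * X ^ 6

theorem legendreTruncation_residual (t : ℝ) :
    t * (1 - t) * legendreTruncation.derivative.derivative.eval t +
        (1 - 2 * t) * legendreTruncation.derivative.eval t + 4 * legendreTruncation.eval t =
      -(7904 / 2025 * t ^ 6) := by
  simp [legendreTruncation]
  ring

theorem abs_legendreTruncation_defect_le {φ : ℝ} (hφ : φ ∈ Ioo 0 (π / 2)) :
    |legendreTruncation.evalHavDeriv2 φ + cos φ / sin φ * legendreTruncation.evalHavDeriv φ +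
      4 * legendreTruncation.evalHav φ| ≤ 247 / 4050 := by
  have hsin : sin φ ≠ 0 := (sin_pos_of_pos_of_lt_pi hφ.1 (by linarith [hφ.2, pi_pos])).ne'
  obtain ⟨ht₀, ht₁⟩ := hav_mem_Icc (Ioo_subset_Icc_self hφ)
  rw [legendreTruncation.evalHavDeriv2_add_cot_mul_evalHavDeriv hsin, Polynomial.evalHav,
    legendreTruncation_residual, abs_neg, abs_of_nonneg (by positivity)]
  calc 7904 / 2025 * hav φ ^ 6 ≤ 7904 / 2025 * (1 / 2) ^ 6 := by gcongr
    _ = 247 / 4050 := by norm_num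

theorem tendsto_legendreTruncation_evalHav :
    Tendsto legendreTruncation.evalHav (𝓝[>] 0) (𝓝 1) := by
  have h := legendreTruncation.continuous_evalHav.tendsto 0
  simp only [Polynomial.evalHav, hav, cos_zero, sub_self, zero_div] at h
  simpa [legendreTruncation] using h.mono_left nhdsWithin_le_nhds

theorem tendsto_legendreTruncation_evalHavDeriv :
    Tendsto legendreTruncation.evalHavDeriv (𝓝[>] 0) (𝓝 0) := by
  have h := legendreTruncation.continuous_evalHavDeriv.tendsto 0
  simp only [Polynomial.evalHavDeriv, sin_zero, zero_div, mul_zero] at h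
  exact h.mono_left nhdsWithin_le_nhds

theorem legendreTruncation_evalHav_pi_div_two :
    legendreTruncation.evalHav (π / 2) = -6877 / 16200 := by
  simp [Polynomial.evalHav, hav, legendreTruncation]
  norm_num

theorem legendreTruncation_evalHavDeriv_pi_div_two :
    legendreTruncation.evalHavDeriv (π / 2) = -1007 / 1350 := by
  simp [Polynomial.evalHavDeriv, hav, legendreTruncation]
  norm_num

theorem stmt17_general (w w₁ w₂ : ℝ → ℝ)
    (hd1 : ∀ φ ∈ Set.Ioc (0 : ℝ) (π / 2), HasDerivWithinAt w (w₁ φ) (Set.Ioc 0 (π / 2)) φ)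
    (hd2 : ∀ φ ∈ Set.Ioc (0 : ℝ) (π / 2), HasDerivWithinAt w₁ (w₂ φ) (Set.Ioc 0 (π / 2)) φ)
    (hode : ∀ φ ∈ Set.Ioo (0 : ℝ) (π / 2), w₂ φ + (cos φ / sin φ) * w₁ φ + 4 * w φ = 0)
    (hw0 : Tendsto w (nhdsWithin 0 (Set.Ioi 0)) (nhds 1))
    (hw1 : Tendsto w₁ (nhdsWithin 0 (Set.Ioi 0)) (nhds 0)) :
    w (π / 2) < 0 ∧ w₁ (π / 2) < 0 := by
  set P := legendreTruncation
  have henergy := sqrt_energy_le_of_abs_defect_le (k := 4) (M := 247 / 4050)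
    (c := fun φ => cos φ / sin φ) (e := fun φ => w φ - P.evalHav φ)
    (e₁ := fun φ => w₁ φ - P.evalHavDeriv φ) (e₂ := fun φ => w₂ φ - P.evalHavDeriv2 φ)
    (by positivity) (by norm_num) (by norm_num)
    (fun φ hφ => (hd1 φ hφ).sub (P.hasDerivAt_evalHav φ).hasDerivWithinAt)
    (fun φ hφ => (hd2 φ hφ).sub (P.hasDerivAt_evalHavDeriv φ).hasDerivWithinAt)
    (fun φ hφ => div_nonneg (cos_nonneg_of_mem_Icc ⟨by linarith [hφ.1, pi_pos], hφ.2.le⟩)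
      (sin_nonneg_of_nonneg_of_le_pi hφ.1.le (by linarith [hφ.2, pi_pos])))
    (fun φ hφ => by
      convert abs_legendreTruncation_defect_le hφ using 1
      rw [← abs_neg]
      congr 1
      linear_combination -hode φ hφ)
    (by simpa using hw0.sub tendsto_legendreTruncation_evalHav)
    (by simpa using hw1.sub tendsto_legendreTruncation_evalHavDeriv)
  rw [sub_zero, Real.sqrt_le_left (by positivity), legendreTruncation_evalHav_pi_div_two,
    legendreTruncation_evalHavDeriv_pi_div_two] at henergy
  have hbound : (247 / 4050 * (π / 2)) ^ 2 ≤ (1 / 8) ^ 2 := by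
    gcongr
    linarith [pi_le_four]
  constructor <;>
    nlinarith [sq_nonneg (w₁ (π / 2) + 1007 / 1350), sq_nonneg (w (π / 2) + 6877 / 16200)]

/-- Let `w` be a `C²` solution on `(0, π/2]` (with first and second
derivatives `w₁`, `w₂`) of the Legendre-type equation `w'' + (cos φ/sin φ)w' + 4w = 0`,
with `w(φ) → 1` and `w'(φ) → 0` as `φ → 0⁺`. Then `w(π/2) < 0` and `w'(π/2) < 0`. -/
theorem stmt17 (w w₁ w₂ : ℝ → ℝ)
    (hd1 : ∀ φ ∈ Set.Ioc (0 : ℝ) (π / 2), HasDerivWithinAt w (w₁ φ) (Set.Ioc 0 (π / 2)) φ)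
    (hd2 : ∀ φ ∈ Set.Ioc (0 : ℝ) (π / 2), HasDerivWithinAt w₁ (w₂ φ) (Set.Ioc 0 (π / 2)) φ)
    (hcont : ContinuousOn w₂ (Set.Ioc 0 (π / 2)))
    (hode : ∀ φ ∈ Set.Ioo (0 : ℝ) (π / 2), w₂ φ + (cos φ / sin φ) * w₁ φ + 4 * w φ = 0)
    (hw0 : Tendsto w (nhdsWithin 0 (Set.Ioi 0)) (nhds 1))
    (hw1 : Tendsto w₁ (nhdsWithin 0 (Set.Ioi 0)) (nhds 0)) :
    w (π / 2) < 0 ∧ w₁ (π / 2) < 0 :=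
  stmt17_general w w₁ w₂ hd1 hd2 hode hw0 hw1

end
end
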